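/- Let h1(r) = 2r/(r²+1), h3(r) = (r²−1)/(r²+1), Q(r) = (h1(r), 0, h3(r)). Then for all r > 0, Q''(r) + r^{−1}Q'(r) + r^{−2}R²Q(r) = κ(r)Q(r) with κ(r) = −2h1(r)²/r². Consequently, the map u(x) = e^{θR}Q(r) (in polar coordinates x = (r cos θ, r sin θ)) satisfies u × Δu = 0 on ℝ² ∖ {0}, i.e. φ = e^{θR}Q is a stationary solution of the Schrödinger map equation. -/

import Mathlib

noncomputable section
open MeasureTheory Real Set Filter
open scoped RealInnerProductSpace Topology

/-- The plane `ℝ²` with its Euclidean structure. -/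
abbrev V2 : Type := EuclideanSpace ℝ (Fin 2)
/-- The space `ℝ³` with its Euclidean structure. -/
abbrev V3 : Type := EuclideanSpace ℝ (Fin 3)

/-- The point `(a, b) ∈ ℝ²`. -/
def pt2 (a b : ℝ) : V2 := WithLp.toLp 2 ![a, b]

/-- The cross product in `ℝ³`. -/
def cross (u v : V3) : V3 :=
  WithLp.toLp 2 ![u 1 * v 2 - u 2 * v 1, u 2 * v 0 - u 0 * v 2, u 0 * v 1 - u 1 * v 0]

/-- `e^{θR}`: rotation by angle `θ` about the `x₃`-axis. -/
def rot3 (θ : ℝ) (v : V3) : V3 :=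
  WithLp.toLp 2 ![Real.cos θ * v 0 - Real.sin θ * v 1, Real.sin θ * v 0 + Real.cos θ * v 1, v 2]

/-- The generator `R` of horizontal rotations, `Rv = k × v` with `k = (0,0,1)`. -/
def Rgen (v : V3) : V3 := WithLp.toLp 2 ![-(v 1), v 0, 0]

/-- Directional (partial) derivative of a map `ℝ² → ℝ³` in direction `e`. -/
def pd (e : V2) (f : V2 → V3) (x : V2) : V3 := fderiv ℝ f x e

/-- The componentwise Laplacian on `ℝ²`. -/
def lap (f : V2 → V3) (x : V2) : V3 :=
  pd (pt2 1 0) (pd (pt2 1 0) f) x + pd (pt2 0 1) (pd (pt2 0 1) f) x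

/-- Squared homogeneous Sobolev seminorm `‖f‖_{Ḣ^k}² = ∫ |∇^k f|²`. -/
def sobSq (k : ℕ) (f : V2 → V3) : ℝ := ∫ x : V2, ‖iteratedFDeriv ℝ k f x‖ ^ 2

/-- The degree one harmonic map `φ(x) = e^{θR} Q(r)`,
`Q = (h₁, 0, h₃)`, `h₁(r) = 2r/(r²+1)`, `h₃(r) = (r²-1)/(r²+1)`. -/
def phi1 (x : V2) : V3 :=
  WithLp.toLp 2 ![2 * x 0 / (x 0 ^ 2 + x 1 ^ 2 + 1), 2 * x 1 / (x 0 ^ 2 + x 1 ^ 2 + 1),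
    (x 0 ^ 2 + x 1 ^ 2 - 1) / (x 0 ^ 2 + x 1 ^ 2 + 1)]

/-- The harmonic map profile `Q(r) = (h₁(r), 0, h₃(r))`. -/
def Qmap (r : ℝ) : V3 := WithLp.toLp 2 ![2 * r / (r ^ 2 + 1), 0, (r ^ 2 - 1) / (r ^ 2 + 1)]

/-!
In Cartesian coordinates `φ = e^{θR}Q` is inverse stereographic projection,
`φ(x) = (2x, |x|² - 1) / (|x|² + 1)`, a conformal harmonic map with energy density
`|∇φ|² = 8 / (|x|² + 1)²`. A direct computation of its second directional derivatives gives the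
harmonic map equation `Δφ = -|∇φ|² φ`, so `Δφ` is parallel to `φ` and `φ × Δφ = 0`. The radial
identity is the same equation written in polar coordinates: `κ(r) = -2h₁(r)²/r² = -8/(r² + 1)²`.
-/

section EuclideanCoord

variable {ι : Type*} [Fintype ι]

theorem hasDerivAt_toLp_of_coord {F : ℝ → EuclideanSpace ℝ ι} {v : ι → ℝ} {r : ℝ}
    (h : ∀ i, HasDerivAt (fun t => F t i) (v i) r) : HasDerivAt F (WithLp.toLp 2 v) r :=
  (PiLp.continuousLinearEquiv 2 ℝ fun _ : ι => ℝ).symm.hasFDerivAt.comp_hasDerivAt r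
    (hasDerivAt_pi.mpr h)

theorem fderiv_apply_eq_toLp_of_coord {E : Type*} [NormedAddCommGroup E] [NormedSpace ℝ E]
    {f : E → EuclideanSpace ℝ ι} {L : ι → E →L[ℝ] ℝ} {x : E}
    (h : ∀ i, HasFDerivAt (fun y => f y i) (L i) x) (e : E) :
    fderiv ℝ f x e = WithLp.toLp 2 fun i => L i e := by
  have hf : HasFDerivAt f
      ((PiLp.continuousLinearEquiv 2 ℝ fun _ : ι => ℝ).symm.toContinuousLinearMap ∘L
        ContinuousLinearMap.pi L) x :=
    (PiLp.continuousLinearEquiv 2 ℝ fun _ : ι => ℝ).symm.hasFDerivAt.comp x (hasFDerivAt_pi.mpr h)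
  rw [hf.fderiv]
  rfl

end EuclideanCoord

theorem HasFDerivAt.div {𝕜 E : Type*} [NontriviallyNormedField 𝕜] [NormedAddCommGroup E]
    [NormedSpace 𝕜 E] {f g : E → 𝕜} {f' g' : E →L[𝕜] 𝕜} {x : E} (hf : HasFDerivAt f f' x)
    (hg : HasFDerivAt g g' x) (hx : g x ≠ 0) :
    HasFDerivAt (fun y => f y / g y) ((g x ^ 2)⁻¹ • (g x • f' - f x • g')) x := by
  simp_rw [div_eq_mul_inv]
  refine (hf.mul ((hasDerivAt_inv hx).comp_hasFDerivAt x hg)).congr_fderiv ?_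
  ext v
  simp only [Function.comp_apply, add_apply, sub_apply, smul_apply, smul_eq_mul, neg_mul, mul_neg]
  field_simp
  ring

theorem Rgen_Rgen (v : V3) : Rgen (Rgen v) = WithLp.toLp 2 ![-v 0, -v 1, 0] := by
  ext i; fin_cases i <;> simp [Rgen]

theorem cross_smul_self (c : ℝ) (u : V3) : cross u (c • u) = 0 := by
  ext i
  fin_cases i <;>
    simp only [cross, PiLp.smul_apply, smul_eq_mul, PiLp.zero_apply, Matrix.cons_val_zero,
      Matrix.cons_val_one, Matrix.cons_val, Fin.reduceFinMk, Fin.isValue] <;>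
    ring

def QmapDeriv (r : ℝ) : V3 :=
  WithLp.toLp 2 ![(2 - 2 * r ^ 2) / (r ^ 2 + 1) ^ 2, 0, 4 * r / (r ^ 2 + 1) ^ 2]

theorem hasDerivAt_Qmap (r : ℝ) : HasDerivAt Qmap (QmapDeriv r) r := by
  have hS : HasDerivAt (fun t : ℝ => t ^ 2 + 1) (2 * r) r := by
    simpa using (hasDerivAt_pow 2 r).add_const 1
  have hS0 : r ^ 2 + 1 ≠ 0 := by positivity
  refine hasDerivAt_toLp_of_coord fun i => ?_
  fin_cases i
  · show HasDerivAt (fun t => 2 * t / (t ^ 2 + 1)) ((2 - 2 * r ^ 2) / (r ^ 2 + 1) ^ 2) r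
    exact (((hasDerivAt_id' r).const_mul 2).div hS hS0).congr_deriv (by field_simp; ring)
  · exact hasDerivAt_const r 0
  · show HasDerivAt (fun t => (t ^ 2 - 1) / (t ^ 2 + 1)) (4 * r / (r ^ 2 + 1) ^ 2) r
    exact (((hasDerivAt_pow 2 r).sub_const 1).div hS hS0).congr_deriv (by field_simp; ring)

theorem hasDerivAt_QmapDeriv (r : ℝ) :
    HasDerivAt QmapDeriv
      (WithLp.toLp 2
        ![4 * r * (r ^ 2 - 3) / (r ^ 2 + 1) ^ 3, 0, (4 - 12 * r ^ 2) / (r ^ 2 + 1) ^ 3]) r := by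
  have hS2 : HasDerivAt (fun t : ℝ => (t ^ 2 + 1) ^ 2) (4 * r * (r ^ 2 + 1)) r :=
    (((hasDerivAt_pow 2 r).add_const 1).pow 2).congr_deriv (by push_cast; ring)
  have hS0 : (r ^ 2 + 1) ^ 2 ≠ 0 := by positivity
  refine hasDerivAt_toLp_of_coord fun i => ?_
  fin_cases i
  · show HasDerivAt (fun t => (2 - 2 * t ^ 2) / (t ^ 2 + 1) ^ 2)
      (4 * r * (r ^ 2 - 3) / (r ^ 2 + 1) ^ 3) r
    exact ((((hasDerivAt_pow 2 r).const_mul 2).const_sub 2).div hS2 hS0).congr_deriv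
      (by field_simp; ring)
  · exact hasDerivAt_const r 0
  · show HasDerivAt (fun t => 4 * t / (t ^ 2 + 1) ^ 2) ((4 - 12 * r ^ 2) / (r ^ 2 + 1) ^ 3) r
    exact (((hasDerivAt_id' r).const_mul 4).div hS2 hS0).congr_deriv (by field_simp; ring)

theorem Qmap_radial_eq {r : ℝ} (hr : r ≠ 0) :
    deriv (deriv Qmap) r + r⁻¹ • deriv Qmap r + (r ^ 2)⁻¹ • Rgen (Rgen (Qmap r)) =
      (-(2 * (2 * r / (r ^ 2 + 1)) ^ 2) / r ^ 2) • Qmap r := by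
  have hQ' : deriv Qmap = QmapDeriv := funext fun t => (hasDerivAt_Qmap t).deriv
  rw [hQ', (hasDerivAt_QmapDeriv r).deriv, Rgen_Rgen]
  ext i
  fin_cases i <;>
    simp only [Qmap, QmapDeriv, PiLp.add_apply, PiLp.smul_apply, smul_eq_mul,
      Matrix.cons_val_zero, Matrix.cons_val_one, Matrix.cons_val, Fin.reduceFinMk, Fin.isValue] <;>
    field_simp <;>
    ring

theorem pd_phi1 (e : V2) :
    pd e phi1 = fun y => WithLp.toLp 2
      ![2 * (e 0 * (y 0 ^ 2 + y 1 ^ 2 + 1) - 2 * y 0 * (y 0 * e 0 + y 1 * e 1)) /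
          (y 0 ^ 2 + y 1 ^ 2 + 1) ^ 2,
        2 * (e 1 * (y 0 ^ 2 + y 1 ^ 2 + 1) - 2 * y 1 * (y 0 * e 0 + y 1 * e 1)) /
          (y 0 ^ 2 + y 1 ^ 2 + 1) ^ 2,
        4 * (y 0 * e 0 + y 1 * e 1) / (y 0 ^ 2 + y 1 ^ 2 + 1) ^ 2] := by
  funext y
  have hy₀ := PiLp.hasFDerivAt_apply (𝕜 := ℝ) 2 y 0
  have hy₁ := PiLp.hasFDerivAt_apply (𝕜 := ℝ) 2 y 1
  have hS := ((hy₀.pow 2).add (hy₁.pow 2)).add_const 1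
  have hS0 : y 0 ^ 2 + y 1 ^ 2 + 1 ≠ 0 := by positivity
  have h₀ := (hy₀.const_mul 2).div hS hS0
  have h₁ := (hy₁.const_mul 2).div hS hS0
  have h₂ := (((hy₀.pow 2).add (hy₁.pow 2)).sub_const 1).div hS hS0
  rw [pd, fderiv_apply_eq_toLp_of_coord (L := ![_, _, _])
    (fun i => by fin_cases i <;> assumption) e]
  ext i
  fin_cases i <;>
    simp only [add_apply, sub_apply, smul_apply, PiLp.proj_apply, smul_eq_mul, nsmul_eq_mul,
      Pi.add_apply, Nat.add_one_sub_one, pow_one, Nat.cast_ofNat, Matrix.cons_val_zero,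
      Matrix.cons_val_one, Matrix.cons_val, Fin.reduceFinMk, Fin.isValue] <;>
    field_simp
  ring

theorem pd_pd_phi1 (e y : V2) :
    pd e (pd e phi1) y = WithLp.toLp 2
      ![(-4 * y 0 * (e 0 ^ 2 + e 1 ^ 2) * (y 0 ^ 2 + y 1 ^ 2 + 1) -
            8 * (y 0 * e 0 + y 1 * e 1) *
              (e 0 * (y 0 ^ 2 + y 1 ^ 2 + 1) - 2 * y 0 * (y 0 * e 0 + y 1 * e 1))) /
          (y 0 ^ 2 + y 1 ^ 2 + 1) ^ 3,
        (-4 * y 1 * (e 0 ^ 2 + e 1 ^ 2) * (y 0 ^ 2 + y 1 ^ 2 + 1) -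
            8 * (y 0 * e 0 + y 1 * e 1) *
              (e 1 * (y 0 ^ 2 + y 1 ^ 2 + 1) - 2 * y 1 * (y 0 * e 0 + y 1 * e 1))) /
          (y 0 ^ 2 + y 1 ^ 2 + 1) ^ 3,
        (4 * (e 0 ^ 2 + e 1 ^ 2) * (y 0 ^ 2 + y 1 ^ 2 + 1) - 16 * (y 0 * e 0 + y 1 * e 1) ^ 2) /
          (y 0 ^ 2 + y 1 ^ 2 + 1) ^ 3] := by
  have hy₀ := PiLp.hasFDerivAt_apply (𝕜 := ℝ) 2 y 0
  have hy₁ := PiLp.hasFDerivAt_apply (𝕜 := ℝ) 2 y 1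
  have hS := ((hy₀.pow 2).add (hy₁.pow 2)).add_const 1
  have hS0 : y 0 ^ 2 + y 1 ^ 2 + 1 ≠ 0 := by positivity
  have hS2 := hS.pow 2
  have hS20 : (y 0 ^ 2 + y 1 ^ 2 + 1) ^ 2 ≠ 0 := by positivity
  have hp := (hy₀.mul_const (e 0)).add (hy₁.mul_const (e 1))
  have h₀ := (((hS.const_mul (e 0)).sub ((hy₀.const_mul 2).mul hp)).const_mul 2).div hS2 hS20
  have h₁ := (((hS.const_mul (e 1)).sub ((hy₁.const_mul 2).mul hp)).const_mul 2).div hS2 hS20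
  have h₂ := (hp.const_mul 4).div hS2 hS20
  rw [pd_phi1, pd, fderiv_apply_eq_toLp_of_coord (L := ![_, _, _])
    (fun i => by fin_cases i <;> assumption) e]
  ext i
  fin_cases i <;>
    simp only [add_apply, sub_apply, smul_apply, PiLp.proj_apply, smul_eq_mul, nsmul_eq_mul,
      Pi.add_apply, Pi.sub_apply, Pi.mul_apply, Nat.add_one_sub_one, pow_one, Nat.cast_ofNat,
      Matrix.cons_val_zero, Matrix.cons_val_one, Matrix.cons_val, Fin.reduceFinMk, Fin.isValue] <;>
    field_simp <;>
    ring

theorem lap_phi1 (x : V2) : lap phi1 x = (-8 / (x 0 ^ 2 + x 1 ^ 2 + 1) ^ 2) • phi1 x := by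
  have hS0 : x 0 ^ 2 + x 1 ^ 2 + 1 ≠ 0 := by positivity
  rw [lap, pd_pd_phi1, pd_pd_phi1]
  ext i
  fin_cases i <;>
    simp only [pt2, phi1, PiLp.add_apply, PiLp.smul_apply, smul_eq_mul, Matrix.cons_val_zero,
      Matrix.cons_val_one, Matrix.cons_val, Fin.reduceFinMk, Fin.isValue] <;>
    field_simp <;>
    ring

theorem Qmap_harmonic :
    (∀ r : ℝ, 0 < r →
      deriv (deriv Qmap) r + r⁻¹ • deriv Qmap r + (r ^ 2)⁻¹ • Rgen (Rgen (Qmap r)) =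
        (-(2 * (2 * r / (r ^ 2 + 1)) ^ 2) / r ^ 2) • Qmap r) ∧
    (∀ x : V2, x ≠ 0 → cross (phi1 x) (lap phi1 x) = 0) :=
  ⟨fun _ hr => Qmap_radial_eq hr.ne', fun x _ => by rw [lap_phi1, cross_smul_self]⟩
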